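/- The dual of the Fano matroid, F_7*, is not 3-entropic: there is no vector X = (X_1,…,X_7) of F_3-valued random variables whose base-3 Shannon entropy function coincides with the rank function of F_7*. -/

import Mathlib

open scoped Classical BigOperators

/-- Shannon entropy in base `q` of a probability mass function on a finite type. -/
noncomputable def shannonEntropy {α : Type*} [Fintype α] (q : ℝ) (μ : PMF α) : ℝ :=
  -∑ x : α, (μ x).toReal * Real.logb q (μ x).toReal

/-- Marginal of a distribution on `ι → α` on the coordinates in `S`. -/
noncomputable def marg {ι α : Type*} (μ : PMF (ι → α)) (S : Finset ι) :
    PMF ({ i // i ∈ S } → α) :=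
  μ.map fun x i => x i.1

/-- The seven nonzero vectors of `F_2^3`, representing the Fano matroid `F_7`. -/
def fanoVec : Fin 7 → (Fin 3 → ZMod 2) :=
  ![![1,0,0], ![0,1,0], ![0,0,1], ![1,1,0], ![1,0,1], ![0,1,1], ![1,1,1]]

/-- The rank function of the Fano matroid, via its `F_2`-representation. -/
noncomputable def fanoRank (S : Finset (Fin 7)) : ℕ :=
  Module.finrank (ZMod 2) (Submodule.span (ZMod 2) (fanoVec '' (S : Set (Fin 7))))

/-!
Suppose `μ` realises `F₇*`. The equality cases of Shannon's inequalities turn its rank function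
into combinatorics of the support `S`: the basis `{0, 1, 2, 3}` of `F₇*` takes all `3⁴` values on
`S`, and in every circuit (the complement of a Fano line) any three coordinates determine the
fourth. Such a circuit is a Latin cube over `ZMod 3`, and every Latin cube of order 3 is an affine
hyperplane. So coordinates 4, 5 and 6 are affine functions of the basis coordinates, and the four
remaining circuits impose relations on the nine coefficients that force `2 = 0` in `ZMod 3`: like
`F₇`, its dual is representable only in characteristic 2.
-/

namespace PMF

variable {α β : Type*} [Fintype α]

lemma sum_toReal (p : PMF α) : ∑ a, (p a).toReal = 1 := by
  rw [← ENNReal.toReal_sum fun a _ => p.apply_ne_top a, ← tsum_fintype (L := .unconditional _),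
    p.tsum_coe, ENNReal.toReal_one]

lemma toReal_map_apply (p : PMF α) (f : α → β) (b : β) :
    (p.map f b).toReal = ∑ a, if b = f a then (p a).toReal else 0 := by
  rw [map_apply, tsum_fintype, ENNReal.toReal_sum fun a _ => by split <;> simp [p.apply_ne_top a]]
  exact Finset.sum_congr rfl fun a _ => by split <;> simp

lemma sum_toReal_le_toReal_map (p : PMF α) (f : α → β) (b : β) (s : Finset α)
    (hs : ∀ a ∈ s, f a = b) : ∑ a ∈ s, (p a).toReal ≤ (p.map f b).toReal := by
  rw [toReal_map_apply]
  calc ∑ a ∈ s, (p a).toReal = ∑ a ∈ s, if b = f a then (p a).toReal else 0 :=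
        Finset.sum_congr rfl fun a ha => by simp [hs a ha]
    _ ≤ _ := Finset.sum_le_sum_of_subset_of_nonneg s.subset_univ fun a _ _ => by
        split <;> simp

lemma sum_toReal_map_mul [Fintype β] (p : PMF α) (f : α → β) (g : β → ℝ) :
    ∑ b, (p.map f b).toReal * g b = ∑ a, (p a).toReal * g (f a) := by
  simp_rw [toReal_map_apply, Finset.sum_mul, ite_mul, zero_mul]
  rw [Finset.sum_comm]
  simp

end PMF

section Entropy

variable {α β : Type*} [Fintype α] {q : ℝ}

lemma shannonEntropy_eq_sum_negMulLog (p : PMF α) :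
    shannonEntropy q p = (∑ a, Real.negMulLog (p a).toReal) / Real.log q := by
  simp only [shannonEntropy, Real.logb, Real.negMulLog, Finset.sum_div, ← Finset.sum_neg_distrib]
  exact Finset.sum_congr rfl fun a _ => by ring

/-- By the equality case of Jensen's inequality for the strictly concave `negMulLog`, maximal
entropy forces the uniform distribution. -/
lemma PMF.apply_ne_zero_of_shannonEntropy_eq_logb_card (hq : 1 < q) (p : PMF α)
    (h : shannonEntropy q p = Real.logb q (Fintype.card α)) (a : α) : p a ≠ 0 := by
  set n : ℝ := (Fintype.card α : ℝ)
  have hn : 0 < n := Nat.cast_pos.mpr (Fintype.card_pos_iff.mpr ⟨a⟩)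
  have hlog : ∑ b, Real.negMulLog (p b).toReal = Real.log n := by
    rw [shannonEntropy_eq_sum_negMulLog, Real.logb] at h
    exact (div_left_inj' (Real.log_pos hq).ne').mp h
  have hconst : ∀ b, (p b).toReal = (p a).toReal := fun b =>
    Real.strictConcaveOn_negMulLog.eq_of_map_sum_eq (t := Finset.univ) (w := fun _ => n⁻¹)
      (fun _ _ => inv_pos.mpr hn) (by simp [n, hn.ne']) (fun _ _ => ENNReal.toReal_nonneg)
      (by simp [← Finset.mul_sum, p.sum_toReal, ← hlog, Real.negMulLog, Real.log_inv])
      (Finset.mem_univ b) (Finset.mem_univ a)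
  have hna : n * (p a).toReal = 1 := by
    rw [← p.sum_toReal, Finset.sum_congr rfl fun b _ => hconst b]
    simp [n]
  intro hpa
  simp [hpa] at hna

/-- Gibbs' argument: `H(p) - H(f₊p) = ∑ₐ pₐ logb ((f₊p)(f a) / pₐ)` is a sum of nonnegative
terms, and it vanishes only if no fibre of `f` carries two atoms of `p`. -/
lemma PMF.injOn_support_of_shannonEntropy_map_eq [Fintype β] (hq : 1 < q) (p : PMF α)
    (f : α → β) (h : shannonEntropy q (p.map f) = shannonEntropy q p) :
    Set.InjOn f p.support := by
  have hpos : ∀ {a}, a ∈ p.support → 0 < (p a).toReal := fun ha =>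
    ENNReal.toReal_pos ((p.mem_support_iff _).mp ha) (p.apply_ne_top _)
  have hle : ∀ a, (p a).toReal ≤ (p.map f (f a)).toReal := fun a => by
    simpa only [Finset.sum_singleton] using p.sum_toReal_le_toReal_map f (f a) {a} (by simp)
  have hterm : ∀ a, 0 ≤ (p a).toReal *
      (Real.logb q (p.map f (f a)).toReal - Real.logb q (p a).toReal) := fun a => by
    rcases (ENNReal.toReal_nonneg : 0 ≤ (p a).toReal).eq_or_lt with h0 | h0
    · simp [← h0]
    · exact mul_nonneg h0.le (sub_nonneg.mpr (Real.logb_le_logb_of_le hq h0 (hle a)))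
  have hsum : ∑ a, (p a).toReal *
      (Real.logb q (p.map f (f a)).toReal - Real.logb q (p a).toReal) = 0 := by
    simp only [shannonEntropy, neg_inj] at h
    rw [← sub_eq_zero.mpr h, p.sum_toReal_map_mul f fun b => Real.logb q (p.map f b).toReal,
      ← Finset.sum_sub_distrib]
    simp only [mul_sub]
  intro a ha a' ha' hfa
  by_contra hne
  have hfibre : (p.map f (f a)).toReal = (p a).toReal := by
    have hzero := (Finset.sum_eq_zero_iff_of_nonneg fun a _ => hterm a).mp hsum a
      (Finset.mem_univ a)
    have hlog := (mul_eq_zero.mp hzero).resolve_left (hpos ha).ne'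
    exact Real.logb_injOn_pos hq ((hpos ha).trans_le (hle a)) (hpos ha) (sub_eq_zero.mp hlog)
  have hpair := p.sum_toReal_le_toReal_map f (f a) {a, a'} (by simp [hfa])
  rw [Finset.sum_pair hne] at hpair
  linarith [hpos ha']

end Entropy

section Marginals

variable {ι α : Type*}

def Determines (S : Set (ι → α)) (T : Finset ι) (i : ι) : Prop :=
  ∀ x ∈ S, ∀ y ∈ S, (∀ j ∈ T, x j = y j) → x i = y i

def Covers (S : Set (ι → α)) (T : Finset ι) : Prop :=
  ∀ y : ι → α, ∃ x ∈ S, ∀ j ∈ T, x j = y j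

lemma support_marg (μ : PMF (ι → α)) (T : Finset ι) :
    (marg μ T).support = (fun x j => x j.1) '' μ.support :=
  PMF.support_map _ _

variable [DecidableEq ι] [Fintype α]

lemma determines_support_of_shannonEntropy_marg_eq {q : ℝ} (hq : 1 < q) (μ : PMF (ι → α))
    {T A : Finset ι} (hTA : T ⊆ A)
    (h : shannonEntropy q (marg μ T) = shannonEntropy q (marg μ A)) {i : ι} (hi : i ∈ A) :
    Determines μ.support T i := by
  have hmap : marg μ T = (marg μ A).map fun y j => y ⟨j.1, hTA j.2⟩ := by
    rw [marg, marg, PMF.map_comp]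
    rfl
  have hinj := (marg μ A).injOn_support_of_shannonEntropy_map_eq hq _ (hmap ▸ h)
  intro x hx y hy hxy
  have hxyA := hinj (by rw [support_marg]; exact ⟨x, hx, rfl⟩)
    (by rw [support_marg]; exact ⟨y, hy, rfl⟩) (funext fun j => hxy j.1 j.2)
  exact congrFun hxyA ⟨i, hi⟩

lemma covers_support_of_shannonEntropy_marg_eq_card [Nontrivial α] (μ : PMF (ι → α))
    (T : Finset ι) (h : shannonEntropy (Fintype.card α) (marg μ T) = T.card) :
    Covers μ.support T := by
  have hα : (1 : ℝ) < Fintype.card α := Nat.one_lt_cast.mpr Fintype.one_lt_card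
  have hmax : shannonEntropy (Fintype.card α) (marg μ T) =
      Real.logb (Fintype.card α) (Fintype.card ({ j // j ∈ T } → α)) := by
    rw [h, Fintype.card_fun, Fintype.card_coe, Nat.cast_pow, Real.logb_pow,
      Real.logb_self_eq_one hα, mul_one]
  intro y
  have hy := (marg μ T).apply_ne_zero_of_shannonEntropy_eq_logb_card hα hmax fun j => y j.1
  rw [← PMF.mem_support_iff, support_marg] at hy
  obtain ⟨x, hx, hxy⟩ := hy
  exact ⟨x, hx, fun j hj => congrFun hxy ⟨j, hj⟩⟩

end Marginals

section FanoRank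

def fanoLines : Finset (Finset (Fin 7)) :=
  {{0, 1, 3}, {0, 2, 4}, {1, 2, 5}, {0, 5, 6}, {1, 4, 6}, {2, 3, 6}, {3, 4, 5}}

lemma card_of_mem_fanoLines {L : Finset (Fin 7)} (hL : L ∈ fanoLines) : L.card = 3 := by
  simp only [fanoLines, Finset.mem_insert, Finset.mem_singleton] at hL
  rcases hL with rfl | rfl | rfl | rfl | rfl | rfl | rfl <;> rfl

lemma fanoRank_le_three (A : Finset (Fin 7)) : fanoRank A ≤ 3 :=
  (Submodule.finrank_le _).trans (by simp)

lemma fanoRank_eq_three_of_linearIndependent {A : Finset (Fin 7)} {i j k : Fin 7}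
    (hi : i ∈ A) (hj : j ∈ A) (hk : k ∈ A)
    (h : LinearIndependent (ZMod 2) ![fanoVec i, fanoVec j, fanoVec k]) : fanoRank A = 3 := by
  refine le_antisymm (fanoRank_le_three A) ?_
  calc 3 = Module.finrank (ZMod 2)
        (Submodule.span (ZMod 2) (Set.range ![fanoVec i, fanoVec j, fanoVec k])) := by
          rw [finrank_span_eq_card h, Fintype.card_fin]
    _ ≤ fanoRank A := by
      refine Submodule.finrank_mono (Submodule.span_mono ?_)
      rintro _ ⟨m, rfl⟩
      fin_cases m <;> exact Set.mem_image_of_mem _ (by simpa)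

/-- A 2-dimensional subspace of `𝔽₂³` has only three nonzero vectors. -/
lemma fanoRank_eq_three_of_four_le_card {A : Finset (Fin 7)} (hA : 4 ≤ A.card) :
    fanoRank A = 3 := by
  set W := Submodule.span (ZMod 2) (fanoVec '' (A : Set (Fin 7)))
  refine le_antisymm (fanoRank_le_three A) (not_lt.mp fun hlt => ?_)
  have hinj : Function.Injective fanoVec := by decide
  have h0 : (0 : Fin 3 → ZMod 2) ∉ A.image fanoVec := by
    simp only [Finset.mem_image, not_exists, not_and]
    intro i _
    fin_cases i <;> decide
  have hsub : (↑(insert 0 (A.image fanoVec)) : Set (Fin 3 → ZMod 2)) ⊆ W := by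
    simp only [Finset.coe_insert, Finset.coe_image, Set.insert_subset_iff]
    exact ⟨W.zero_mem, Submodule.subset_span⟩
  have hcard : A.card + 1 ≤ Nat.card W := by
    rw [← Finset.card_image_of_injective A hinj, ← Finset.card_insert_of_notMem h0,
      ← Set.ncard_coe_finset, ← SetLike.coe_sort_coe, Nat.card_coe_set_eq]
    exact Set.ncard_le_ncard hsub
  have hW : Nat.card W = 2 ^ fanoRank A := by
    rw [Module.natCard_eq_pow_finrank (K := ZMod 2), Nat.card_zmod]
    rfl
  have : 2 ^ fanoRank A ≤ 2 ^ 2 := Nat.pow_le_pow_right two_pos (by omega)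
  omega

lemma fanoRank_eq_two_of_add_eq {i j k : Fin 7} (hk : fanoVec k = fanoVec i + fanoVec j)
    (h : LinearIndependent (ZMod 2) ![fanoVec i, fanoVec j]) : fanoRank {i, j, k} = 2 := by
  have himage : fanoVec '' ↑({i, j, k} : Finset (Fin 7)) =
      insert (fanoVec k) (Set.range ![fanoVec i, fanoVec j]) := by
    simp only [Finset.coe_insert, Finset.coe_singleton, Set.image_insert_eq, Set.image_singleton,
      Matrix.range_cons, Matrix.range_empty, Set.union_empty, Set.singleton_union]
    rw [Set.pair_comm (fanoVec j), Set.insert_comm (fanoVec i)]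
  rw [fanoRank, himage, Submodule.span_insert_eq_span, finrank_span_eq_card h, Fintype.card_fin]
  rw [hk]
  exact add_mem (Submodule.subset_span ⟨0, rfl⟩) (Submodule.subset_span ⟨1, rfl⟩)

lemma fanoRank_of_mem_fanoLines {L : Finset (Fin 7)} (hL : L ∈ fanoLines) : fanoRank L = 2 := by
  simp only [fanoLines, Finset.mem_insert, Finset.mem_singleton] at hL
  rcases hL with rfl | rfl | rfl | rfl | rfl | rfl | rfl <;>
    exact fanoRank_eq_two_of_add_eq (by decide) (LinearIndependent.pair_iff.mpr (by decide))

end FanoRank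

section LatinCube

open Function

lemma eq_affine_of_injective_zmod3 :
    ∀ c : ZMod 3 → ZMod 3, Injective c → ∀ z, c z = c 0 + (c 1 - c 0) * z := by
  decide

lemma sub_eq_sub_of_injective_zmod3 : ∀ c c' : ZMod 3 → ZMod 3, Injective c → Injective c' →
    (∀ y, c y ≠ c' y) → ∀ y, c' y - c y = c' 0 - c 0 := by
  decide

lemma latin_square_affine_zmod3 (L : ZMod 3 → ZMod 3 → ZMod 3)
    (hx : ∀ y, Injective (L · y)) (hy : ∀ x, Injective (L x)) (x y : ZMod 3) :
    L x y = L 0 0 + (L 1 0 - L 0 0) * x + (L 0 1 - L 0 0) * y := by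
  have hrow := eq_affine_of_injective_zmod3 (L · y) (hx y) x
  have hcol := eq_affine_of_injective_zmod3 (L 0) (hy 0) y
  have hdiff := sub_eq_sub_of_injective_zmod3 (L 0) (L 1) (hy 0) (hy 1)
    (fun y h => zero_ne_one (hx y h)) y
  rw [hrow, hdiff, hcol]
  ring

lemma latin_cube_affine_zmod3 (f : ZMod 3 → ZMod 3 → ZMod 3 → ZMod 3)
    (hx : ∀ y z, Injective (f · y z)) (hy : ∀ x z, Injective (f x · z))
    (hz : ∀ x y, Injective (f x y)) (x y z : ZMod 3) :
    f x y z = f 0 0 0 + (f 1 0 0 - f 0 0 0) * x + (f 0 1 0 - f 0 0 0) * y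
      + (f 0 0 1 - f 0 0 0) * z := by
  have hyz := latin_square_affine_zmod3 (f x) (fun z => hy x z) (hz x) y z
  have hxy := latin_square_affine_zmod3 (f · · 0) (fun y => hx y 0) (fun x => hy x 0)
  have hxz := latin_square_affine_zmod3 (fun x z => f x 0 z) (fun z => hx 0 z) (fun x => hz x 0)
  rw [hyz, hxy x 1, hxz x 1, hxy x 0]
  ring

/-- The patterns on `a, b, c, d` form a Latin cube, hence an affine hyperplane. -/
lemma exists_affine_of_determines {ι : Type*} [DecidableEq ι] {S : Set (ι → ZMod 3)}
    {a b c d : ι} (hcov : ∀ p q r, ∃ x ∈ S, x a = p ∧ x b = q ∧ x c = r)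
    (hd : Determines S {a, b, c} d) (ha : Determines S {b, c, d} a)
    (hb : Determines S {a, c, d} b) (hc : Determines S {a, b, d} c) :
    ∃ k u v w : ZMod 3, u ≠ 0 ∧ v ≠ 0 ∧ w ≠ 0 ∧
      ∀ x ∈ S, x d = k + u * x a + v * x b + w * x c := by
  choose pt hS hpa hpb hpc using hcov
  have hf : ∀ x ∈ S, x d = pt (x a) (x b) (x c) d := fun x hx =>
    hd x hx _ (hS ..) (by simp [hpa, hpb, hpc])
  have hx : ∀ q r, Injective (pt · q r d) := fun q r p p' h => by
    rw [← hpa p q r, ← hpa p' q r]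
    exact ha _ (hS ..) _ (hS ..) (by simp [hpb, hpc, h])
  have hy : ∀ p r, Injective (pt p · r d) := fun p r q q' h => by
    rw [← hpb p q r, ← hpb p q' r]
    exact hb _ (hS ..) _ (hS ..) (by simp [hpa, hpc, h])
  have hz : ∀ p q, Injective (pt p q · d) := fun p q r r' h => by
    rw [← hpc p q r, ← hpc p q r']
    exact hc _ (hS ..) _ (hS ..) (by simp [hpa, hpb, h])
  refine ⟨_, _, _, _, sub_ne_zero.mpr fun h => one_ne_zero (hx 0 0 h),
    sub_ne_zero.mpr fun h => one_ne_zero (hy 0 0 h),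
    sub_ne_zero.mpr fun h => one_ne_zero (hz 0 0 h),
    fun x hx' => (hf x hx').trans (latin_cube_affine_zmod3 (pt · · · d) hx hy hz _ _ _)⟩

end LatinCube

/-- Multiplying the relations and using `u * u = 1` for `u ≠ 0` leaves `2 * a₂ * a₃ = 0`. -/
lemma fano_relations_inconsistent_zmod3 : ∀ a₁ a₂ a₃ b₀ b₂ b₃ c₀ c₁ c₂ : ZMod 3,
    a₁ ≠ 0 → a₂ ≠ 0 → a₃ ≠ 0 → b₀ ≠ 0 → b₂ ≠ 0 → b₃ ≠ 0 → c₀ ≠ 0 → c₁ ≠ 0 → c₂ ≠ 0 →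
    b₂ * a₃ = b₃ * a₂ → c₁ * a₂ = c₂ * a₁ → c₀ * b₂ = c₂ * b₀ →
    c₀ * (b₀ * b₃) + c₁ * (a₁ * a₃) ≠ 0 := by
  decide

/-- What the entropy conditions of `F₇*` say about the support of a realising distribution. -/
structure IsFanoDualCode (S : Set (Fin 7 → ZMod 3)) : Prop where
  covers_basis : Covers S {0, 1, 2, 3}
  determines : ∀ (C T : Finset (Fin 7)) (i : Fin 7),
    Cᶜ ∈ fanoLines ∧ T ⊆ C ∧ T.card = 3 ∧ i ∈ C → Determines S T i

namespace IsFanoDualCode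

variable {S : Set (Fin 7 → ZMod 3)}

lemma exists_mem (hS : IsFanoDualCode S) (p q r s : ZMod 3) :
    ∃ x ∈ S, x 0 = p ∧ x 1 = q ∧ x 2 = r ∧ x 3 = s := by
  obtain ⟨x, hx, h⟩ := hS.covers_basis ![p, q, r, s, 0, 0, 0]
  exact ⟨x, hx, h 0 (by decide), h 1 (by decide), h 2 (by decide), h 3 (by decide)⟩

lemma coeff_relations (hS : IsFanoDualCode S) {k₄ a₁ a₂ a₃ k₅ b₀ b₂ b₃ k₆ c₀ c₁ c₂ : ZMod 3}
    (h₄ : ∀ x ∈ S, x 4 = k₄ + a₁ * x 1 + a₂ * x 2 + a₃ * x 3)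
    (h₅ : ∀ x ∈ S, x 5 = k₅ + b₀ * x 0 + b₂ * x 2 + b₃ * x 3)
    (h₆ : ∀ x ∈ S, x 6 = k₆ + c₀ * x 0 + c₁ * x 1 + c₂ * x 2) (ha₁ : a₁ ≠ 0) (hb₀ : b₀ ≠ 0) :
    b₂ * a₃ = b₃ * a₂ ∧ c₁ * a₂ = c₂ * a₁ ∧ c₀ * b₂ = c₂ * b₀ ∧
      c₀ * (b₀ * b₃) + c₁ * (a₁ * a₃) = 0 := by
  choose X hXS hX₀ hX₁ hX₂ hX₃ using hS.exists_mem
  have hX : ∀ p q r s, X p q r s = ![p, q, r, s, k₄ + a₁ * q + a₂ * r + a₃ * s,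
      k₅ + b₀ * p + b₂ * r + b₃ * s, k₆ + c₀ * p + c₁ * q + c₂ * r] := fun p q r s => by
    ext i
    fin_cases i <;> simp [hX₀, hX₁, hX₂, hX₃, h₄ _ (hXS ..), h₅ _ (hXS ..), h₆ _ (hXS ..)]
  have hsq : ∀ u : ZMod 3, u ≠ 0 → u * u = 1 := by decide
  -- each relation compares two points of `S` chosen to agree on three coordinates of a circuit
  refine ⟨?_, ?_, ?_, ?_⟩
  · have h := hS.determines {0, 1, 4, 5} {0, 1, 4} 5 (by decide) _ (hXS 0 0 a₃ 0) _
      (hXS 0 0 0 a₂) (by simp only [hX, Finset.mem_insert, Finset.mem_singleton,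
        forall_eq_or_imp, forall_eq, Matrix.cons_val, true_and]; ring)
    simp only [hX, Matrix.cons_val] at h
    linear_combination h
  · have h := hS.determines {0, 3, 4, 6} {0, 3, 4} 6 (by decide) _ (hXS 0 a₂ 0 0) _
      (hXS 0 0 a₁ 0) (by simp only [hX, Finset.mem_insert, Finset.mem_singleton,
        forall_eq_or_imp, forall_eq, Matrix.cons_val, true_and]; ring)
    simp only [hX, Matrix.cons_val] at h
    linear_combination h
  · have h := hS.determines {1, 3, 5, 6} {1, 3, 5} 6 (by decide) _ (hXS b₂ 0 0 0) _
      (hXS 0 0 b₀ 0) (by simp only [hX, Finset.mem_insert, Finset.mem_singleton,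
        forall_eq_or_imp, forall_eq, Matrix.cons_val, true_and]; ring)
    simp only [hX, Matrix.cons_val] at h
    linear_combination h
  · have hagree : ∀ j ∈ ({2, 4, 5} : Finset (Fin 7)),
        X 0 0 0 1 j = X (b₀ * b₃) (a₁ * a₃) 0 0 j := by
      simp only [hX, Finset.mem_insert, Finset.mem_singleton, forall_eq_or_imp, forall_eq,
        Matrix.cons_val, true_and]
      exact ⟨by linear_combination (-a₃) * hsq a₁ ha₁, by linear_combination (-b₃) * hsq b₀ hb₀⟩
    have h := hS.determines {2, 4, 5, 6} {2, 4, 5} 6 (by decide) _ (hXS 0 0 0 1) _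
      (hXS (b₀ * b₃) (a₁ * a₃) 0 0) hagree
    simp only [hX, Matrix.cons_val] at h
    linear_combination -h

end IsFanoDualCode

theorem not_isFanoDualCode (S : Set (Fin 7 → ZMod 3)) : ¬ IsFanoDualCode S := by
  intro hS
  obtain ⟨k₄, a₁, a₂, a₃, ha₁, ha₂, ha₃, h₄⟩ :=
    exists_affine_of_determines (a := 1) (b := 2) (c := 3) (d := 4)
    (fun p q r => by obtain ⟨x, hx, -, h⟩ := hS.exists_mem 0 p q r; exact ⟨x, hx, h⟩)
    (hS.determines {1, 2, 3, 4} {1, 2, 3} 4 (by decide))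
    (hS.determines {1, 2, 3, 4} {2, 3, 4} 1 (by decide))
    (hS.determines {1, 2, 3, 4} {1, 3, 4} 2 (by decide))
    (hS.determines {1, 2, 3, 4} {1, 2, 4} 3 (by decide))
  obtain ⟨k₅, b₀, b₂, b₃, hb₀, hb₂, hb₃, h₅⟩ :=
    exists_affine_of_determines (a := 0) (b := 2) (c := 3) (d := 5)
    (fun p q r => by obtain ⟨x, hx, h₀, -, h⟩ := hS.exists_mem p 0 q r; exact ⟨x, hx, h₀, h⟩)
    (hS.determines {0, 2, 3, 5} {0, 2, 3} 5 (by decide))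
    (hS.determines {0, 2, 3, 5} {2, 3, 5} 0 (by decide))
    (hS.determines {0, 2, 3, 5} {0, 3, 5} 2 (by decide))
    (hS.determines {0, 2, 3, 5} {0, 2, 5} 3 (by decide))
  obtain ⟨k₆, c₀, c₁, c₂, hc₀, hc₁, hc₂, h₆⟩ :=
    exists_affine_of_determines (a := 0) (b := 1) (c := 2) (d := 6)
    (fun p q r => by
      obtain ⟨x, hx, h₀, h₁, h₂, -⟩ := hS.exists_mem p q r 0; exact ⟨x, hx, h₀, h₁, h₂⟩)
    (hS.determines {0, 1, 2, 6} {0, 1, 2} 6 (by decide))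
    (hS.determines {0, 1, 2, 6} {1, 2, 6} 0 (by decide))
    (hS.determines {0, 1, 2, 6} {0, 2, 6} 1 (by decide))
    (hS.determines {0, 1, 2, 6} {0, 1, 6} 2 (by decide))
  obtain ⟨e₁, e₂, e₃, e₄⟩ := hS.coeff_relations h₄ h₅ h₆ ha₁ hb₀
  exact fano_relations_inconsistent_zmod3 a₁ a₂ a₃ b₀ b₂ b₃ c₀ c₁ c₂ ha₁ ha₂ ha₃ hb₀ hb₂ hb₃
    hc₀ hc₁ hc₂ e₁ e₂ e₃ e₄

lemma isFanoDualCode_support (μ : PMF (Fin 7 → ZMod 3))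
    (hμ : ∀ A : Finset (Fin 7),
      shannonEntropy 3 (marg μ A) = (fanoRank Aᶜ : ℝ) + A.card - 3) :
    IsFanoDualCode μ.support where
  covers_basis := by
    refine covers_support_of_shannonEntropy_marg_eq_card μ _ ?_
    have hbasis : fanoRank ({0, 1, 2, 3} : Finset (Fin 7))ᶜ = 3 :=
      fanoRank_eq_three_of_linearIndependent (i := 4) (j := 5) (k := 6) (by decide) (by decide)
        (by decide) (by rw [Fintype.linearIndependent_iff]; decide)
    rw [ZMod.card, Nat.cast_ofNat, hμ, hbasis]
    norm_num
  determines := by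
    rintro C T i ⟨hC, hTC, hT, hi⟩
    have hCcard : C.card = 4 := by
      have hL := card_of_mem_fanoLines hC
      rw [Finset.card_compl, Fintype.card_fin] at hL
      omega
    have hTcompl : fanoRank Tᶜ = 3 := fanoRank_eq_three_of_four_le_card (by
      rw [Finset.card_compl, Fintype.card_fin, hT])
    refine determines_support_of_shannonEntropy_marg_eq (by norm_num : (1 : ℝ) < 3) μ hTC ?_ hi
    rw [hμ, hμ, hTcompl, fanoRank_of_mem_fanoLines hC, hT, hCcard]
    norm_num

/-- The dual `F_7^*` of the Fano matroid, with rank function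
`A ↦ r(E ∖ A) + |A| − r(E)`, is not 3-entropic. -/
theorem fano_dual_not_three_entropic :
    ¬ ∃ μ : PMF (Fin 7 → ZMod 3),
      ∀ A : Finset (Fin 7),
        shannonEntropy 3 (marg μ A) = (fanoRank Aᶜ : ℝ) + A.card - 3 := by
  rintro ⟨μ, hμ⟩
  exact not_isFanoDualCode μ.support (isFanoDualCode_support μ hμ)
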